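/- For all a ∈ ℂ, a ≠ 0, and n ≥ 1, the Charlier polynomials satisfy (a−n)·C_n(x;a) + n·(C_n(x;a) − C_{n−1}(x;a)) = a·C_n(x+1;a). -/

import Mathlib

open Finset

noncomputable def poch (a : ℂ) (k : ℕ) : ℂ := ∏ i ∈ Finset.range k, (a + i)

/-- Charlier polynomial `C_n(x;a)`. -/
noncomputable def charlier (n : ℕ) (a x : ℂ) : ℂ :=
  ∑ k ∈ Finset.range (n + 1),
    poch (-(n : ℂ)) k * poch (-x) k / (k.factorial : ℂ) * (-1 / a) ^ k

/-!
The identity is the forward-difference relation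
`a (C_{n}(x) - C_{n}(x+1)) = n C_{n-1}(x)` rearranged. That relation is checked termwise:
the forward difference of the rising factorial `(-x)_k` is `k (-x)_{k-1}`, which cancels
against `k!`, while `(-n)_k = -n (1-n)_{k-1}` and `a (-1/a)^k = -(-1/a)^{k-1}` lower the
remaining indices by one.
-/

@[simp] lemma poch_zero (a : ℂ) : poch a 0 = 1 := by simp [poch]

lemma poch_succ (a : ℂ) (k : ℕ) : poch a (k + 1) = poch a k * (a + k) :=
  prod_range_succ _ _

lemma poch_succ' (a : ℂ) (k : ℕ) : poch a (k + 1) = a * poch (a + 1) k := by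
  rw [poch, prod_range_succ', poch, mul_comm]
  congr 1
  · simp
  · exact prod_congr rfl fun i _ => by push_cast; ring

lemma poch_neg_sub_poch_neg_add_one (x : ℂ) (k : ℕ) :
    poch (-x) (k + 1) - poch (-(x + 1)) (k + 1) = (k + 1) * poch (-x) k := by
  rw [poch_succ' (-(x + 1)), show -(x + 1) + 1 = -x by ring, poch_succ]
  ring

lemma poch_neg_natCast_succ (m k : ℕ) :
    poch (-((m + 1 : ℕ) : ℂ)) (k + 1) = -((m : ℂ) + 1) * poch (-(m : ℂ)) k := by
  rw [poch_succ']
  push_cast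
  ring_nf

lemma charlier_sub_charlier_add_one {a : ℂ} (ha : a ≠ 0) (m : ℕ) (x : ℂ) :
    a * (charlier (m + 1) a x - charlier (m + 1) a (x + 1)) = ((m : ℂ) + 1) * charlier m a x := by
  rw [charlier, charlier, ← sum_sub_distrib, sum_range_succ']
  simp only [poch_zero, sub_self, add_zero]
  rw [charlier, mul_sum, mul_sum]
  refine sum_congr rfl fun k _ => ?_
  have hfact : ((k + 1).factorial : ℂ) = ((k : ℂ) + 1) * k.factorial := by
    push_cast [Nat.factorial_succ]; ring
  rw [poch_neg_natCast_succ, hfact, pow_succ]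
  calc _ = ((m : ℂ) + 1) * poch (-(m : ℂ)) k / (((k : ℂ) + 1) * k.factorial) * (-1 / a) ^ k *
        (poch (-x) (k + 1) - poch (-(x + 1)) (k + 1)) := by field_simp
    _ = _ := by rw [poch_neg_sub_poch_neg_add_one]; field_simp

theorem charlier_backward_shift (a x : ℂ) (ha : a ≠ 0) (n : ℕ) (hn : 1 ≤ n) :
    (a - n) * charlier n a x + (n : ℂ) * (charlier n a x - charlier (n - 1) a x) =
      a * charlier n a (x + 1) := by
  obtain ⟨m, rfl⟩ := Nat.exists_eq_add_of_le' hn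
  rw [Nat.add_sub_cancel]
  push_cast
  linear_combination charlier_sub_charlier_add_one ha m x
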